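/- Let L ∈ (0,∞), p ∈ [1,∞), α ∈ (p,∞). Then for every measurable f, with c = (α/(α−p))^{1/p} L^{1/p − 1/α}: the quantity ‖f‖ = (∫₀ᴸ ((1/t)∫₀ᵗ f*(s)^α ds)^{p/α} dt)^{1/p} satisfies 2^{−1/α}(1 − 2^{(p−α)/α})^{1/p} · c · ‖f‖_{L^α} ≤ ‖f‖ ≤ c · ‖f‖_{L^α}, where ‖f‖_{L^α} = (∫₀ᴸ f*(s)^α ds)^{1/α}. In particular (L^p)^⟨α⟩ = L^α with equivalent norms. -/

import Mathlib

/-! Writing `g = (f*)^α` (non-increasing) and `r = p/α < 1`, the integrand is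
`t^(-r) (∫₀ᵗ g)^r`. Bounding `∫₀ᵗ g` above by `∫₀ᴸ g` leaves `∫₀ᴸ t^(-r) dt = L^(1-r)/(1-r)`;
for the lower bound keep only `t ∈ (L/2, L]`, where `∫₀ᵗ g ≥ ∫₀^{L/2} g ≥ ½ ∫₀ᴸ g` by
monotonicity of `g`. Taking `1/p`-th powers gives the two constants. -/

open MeasureTheory ENNReal Set Filter Topology

/-- The decreasing rearrangement of `f` with respect to `μ`. -/
noncomputable def rearr {X : Type*} [MeasurableSpace X] (μ : Measure X) (f : X → ℝ) (t : ℝ) : ℝ :=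
  sInf {l : ℝ | 0 ≤ l ∧ μ {x | l < |f x|} ≤ ENNReal.ofReal t}

/-- The maximal (average) decreasing rearrangement `f**`. -/
noncomputable def maxRearr {X : Type*} [MeasurableSpace X] (μ : Measure X) (f : X → ℝ) (t : ℝ) : ℝ :=
  (1 / t) * ∫ s in Set.Ioc (0:ℝ) t, rearr μ f s

section Rearrangement

variable {X : Type*} [MeasurableSpace X] (μ : Measure X) [IsFiniteMeasure μ] {f : X → ℝ}

lemma exists_measure_abs_gt_le (hf : Measurable f) {t : ℝ} (ht : 0 < t) :
    ∃ l : ℝ, 0 ≤ l ∧ μ {x | l < |f x|} ≤ ENNReal.ofReal t := by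
  have hlim : Tendsto (fun n : ℕ => μ {x | (n : ℝ) < |f x|}) atTop
      (𝓝 (μ (⋂ n : ℕ, {x | (n : ℝ) < |f x|}))) :=
    tendsto_measure_iInter_atTop
      (fun _ => (measurableSet_lt measurable_const hf.abs).nullMeasurableSet)
      (fun n m hnm x (hx : (m : ℝ) < |f x|) => (Nat.cast_le.mpr hnm).trans_lt hx)
      ⟨0, measure_ne_top μ _⟩
  have hempty : (⋂ n : ℕ, {x | (n : ℝ) < |f x|}) = ∅ :=
    eq_empty_of_forall_notMem fun x hx =>
      let ⟨n, hn⟩ := exists_nat_ge |f x|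
      (mem_iInter.mp hx n).not_ge hn
  rw [hempty, measure_empty] at hlim
  obtain ⟨n, hn⟩ := (hlim.eventually_lt_const (ENNReal.ofReal_pos.mpr ht)).exists
  exact ⟨n, n.cast_nonneg, hn.le⟩

lemma rearr_antitoneOn (hf : Measurable f) : AntitoneOn (rearr μ f) (Ioi 0) :=
  fun _ hs _ _ hst =>
    csInf_le_csInf ⟨0, fun _ hl => hl.1⟩ (exists_measure_abs_gt_le μ hf hs)
      fun _ hl => ⟨hl.1, hl.2.trans (ENNReal.ofReal_le_ofReal hst)⟩

end Rearrangement

lemma lintegral_Ioc_ofReal_rpow_neg {r a b : ℝ} (hr : r < 1) (ha : 0 ≤ a) (hab : a ≤ b) :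
    ∫⁻ t in Ioc a b, ENNReal.ofReal t ^ (-r) =
      ENNReal.ofReal ((b ^ (1 - r) - a ^ (1 - r)) / (1 - r)) := by
  rw [setLIntegral_congr_fun measurableSet_Ioc
      fun t ht => (ENNReal.ofReal_rpow_of_pos (ha.trans_lt ht.1) : _),
    ← ofReal_integral_eq_lintegral_ofReal
      ((intervalIntegrable_iff_integrableOn_Ioc_of_le hab).mp
        (intervalIntegral.intervalIntegrable_rpow' (by linarith)))
      ((ae_restrict_iff' measurableSet_Ioc).mpr
        (ae_of_all _ fun t ht => Real.rpow_nonneg (ha.trans ht.1.le) _)),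
    ← intervalIntegral.integral_of_le hab, integral_rpow (Or.inl (by linarith))]
  ring_nf

lemma lintegral_Ioc_le_two_mul_of_antitoneOn {g : ℝ → ℝ≥0∞} (hg : AntitoneOn g (Ioi 0))
    {L : ℝ} (hL : 0 < L) :
    ∫⁻ s in Ioc 0 L, g s ≤ 2 * ∫⁻ s in Ioc 0 (L / 2), g s := by
  have hL2 : 0 < L / 2 := half_pos hL
  have hright : ∫⁻ s in Ioc (L / 2) L, g s ≤ ∫⁻ s in Ioc 0 (L / 2), g s :=
    calc ∫⁻ s in Ioc (L / 2) L, g s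
        ≤ ∫⁻ _ in Ioc (L / 2) L, g (L / 2) :=
          setLIntegral_mono' measurableSet_Ioc fun s hs => hg hL2 (hL2.trans hs.1) hs.1.le
      _ = ∫⁻ _ in Ioc 0 (L / 2), g (L / 2) := by
          simp only [setLIntegral_const, Real.volume_Ioc]
          ring_nf
      _ ≤ ∫⁻ s in Ioc 0 (L / 2), g s :=
          setLIntegral_mono' measurableSet_Ioc fun s hs => hg hs.1 hL2 hs.2
  rw [← Ioc_union_Ioc_eq_Ioc hL2.le (half_le_self hL.le),
    lintegral_union measurableSet_Ioc (Ioc_disjoint_Ioc_of_le le_rfl), two_mul]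
  gcongr

section HardyAverage

variable (g : ℝ → ℝ≥0∞) {r : ℝ}

lemma one_div_ofReal_mul_rpow (hr : 0 ≤ r) (t : ℝ) (C : ℝ≥0∞) :
    (1 / ENNReal.ofReal t * C) ^ r = ENNReal.ofReal t ^ (-r) * C ^ r := by
  rw [ENNReal.mul_rpow_of_nonneg _ _ hr, one_div, ENNReal.inv_rpow, ← ENNReal.rpow_neg]

lemma lintegral_average_rpow_le (hr0 : 0 ≤ r) (hr1 : r < 1) {L : ℝ} (hL : 0 ≤ L) :
    ∫⁻ t in Ioc 0 L, (1 / ENNReal.ofReal t * ∫⁻ s in Ioc 0 t, g s) ^ r ≤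
      ENNReal.ofReal (L ^ (1 - r) / (1 - r)) * (∫⁻ s in Ioc 0 L, g s) ^ r :=
  calc ∫⁻ t in Ioc 0 L, (1 / ENNReal.ofReal t * ∫⁻ s in Ioc 0 t, g s) ^ r
      ≤ ∫⁻ t in Ioc 0 L, ENNReal.ofReal t ^ (-r) * (∫⁻ s in Ioc 0 L, g s) ^ r := by
        refine setLIntegral_mono' measurableSet_Ioc fun t ht => ?_
        rw [one_div_ofReal_mul_rpow hr0]
        gcongr
        exact ht.2
    _ = ENNReal.ofReal (L ^ (1 - r) / (1 - r)) * (∫⁻ s in Ioc 0 L, g s) ^ r := by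
        rw [lintegral_mul_const'' _ (by fun_prop), lintegral_Ioc_ofReal_rpow_neg hr1 le_rfl hL,
          Real.zero_rpow (by linarith), sub_zero]

lemma lintegral_Ioc_rpow_neg_mul_le_lintegral_average_rpow (hr : 0 ≤ r) {a L : ℝ} (ha : 0 ≤ a) :
    (∫⁻ t in Ioc a L, ENNReal.ofReal t ^ (-r)) * (∫⁻ s in Ioc 0 a, g s) ^ r ≤
      ∫⁻ t in Ioc 0 L, (1 / ENNReal.ofReal t * ∫⁻ s in Ioc 0 t, g s) ^ r :=
  calc (∫⁻ t in Ioc a L, ENNReal.ofReal t ^ (-r)) * (∫⁻ s in Ioc 0 a, g s) ^ r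
      = ∫⁻ t in Ioc a L, ENNReal.ofReal t ^ (-r) * (∫⁻ s in Ioc 0 a, g s) ^ r :=
        (lintegral_mul_const'' _ (by fun_prop)).symm
    _ ≤ ∫⁻ t in Ioc a L, (1 / ENNReal.ofReal t * ∫⁻ s in Ioc 0 t, g s) ^ r := by
        refine setLIntegral_mono' measurableSet_Ioc fun t ht => ?_
        rw [one_div_ofReal_mul_rpow hr]
        gcongr
        exact ht.1.le
    _ ≤ ∫⁻ t in Ioc 0 L, (1 / ENNReal.ofReal t * ∫⁻ s in Ioc 0 t, g s) ^ r :=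
        lintegral_mono_set (Ioc_subset_Ioc_left ha)

lemma le_lintegral_average_rpow_of_antitoneOn {g : ℝ → ℝ≥0∞} (hg : AntitoneOn g (Ioi 0))
    (hr0 : 0 ≤ r) (hr1 : r < 1) {L : ℝ} (hL : 0 < L) :
    ENNReal.ofReal ((L ^ (1 - r) - (L / 2) ^ (1 - r)) / (1 - r) * 2 ^ (-r)) *
        (∫⁻ s in Ioc 0 L, g s) ^ r ≤
      ∫⁻ t in Ioc 0 L, (1 / ENNReal.ofReal t * ∫⁻ s in Ioc 0 t, g s) ^ r := by
  have hL2 : 0 ≤ L / 2 := by positivity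
  have hhalf : (2⁻¹ * ∫⁻ s in Ioc 0 L, g s) ^ r ≤ (∫⁻ s in Ioc 0 (L / 2), g s) ^ r := by
    gcongr
    rw [ENNReal.inv_mul_le_iff two_ne_zero ofNat_ne_top]
    exact lintegral_Ioc_le_two_mul_of_antitoneOn hg hL
  refine le_trans ?_ ((mul_le_mul_right hhalf _).trans
    (lintegral_Ioc_rpow_neg_mul_le_lintegral_average_rpow g hr0 hL2))
  rw [lintegral_Ioc_ofReal_rpow_neg hr1 hL2 (half_le_self hL.le),
    ENNReal.mul_rpow_of_nonneg _ _ hr0, ← mul_assoc, ENNReal.inv_rpow, ← ENNReal.rpow_neg,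
    ENNReal.ofReal_mul' (by positivity), ← ENNReal.ofReal_rpow_of_pos two_pos, ENNReal.ofReal_ofNat]

end HardyAverage

lemma ENNReal.ofReal_mul_rpow_rpow {a : ℝ} (ha : 0 ≤ a) (J : ℝ≥0∞) (r : ℝ) {q : ℝ} (hq : 0 ≤ q) :
    (ENNReal.ofReal a * J ^ r) ^ q = ENNReal.ofReal (a ^ q) * J ^ (r * q) := by
  rw [ENNReal.mul_rpow_of_nonneg _ _ hq, ENNReal.ofReal_rpow_of_nonneg ha hq, ← ENNReal.rpow_mul]

section Constants

variable {p α L : ℝ}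

lemma rpow_one_div_hardy_upper_const (hp : 0 < p) (hα : p < α) (hL : 0 ≤ L) :
    (L ^ (1 - p / α) / (1 - p / α)) ^ (1 / p) = (α / (α - p)) ^ (1 / p) * L ^ (1 / p - 1 / α) := by
  have hα0 : 0 < α := hp.trans hα
  have h1r : 1 - p / α = (α - p) / α := by field_simp
  rw [div_eq_mul_inv, mul_comm, h1r, inv_div, Real.mul_rpow (by bound) (by positivity),
    ← Real.rpow_mul hL]
  congr 2
  field_simp

lemma ofReal_hardy_upper_const_mul_rpow (hp : 0 < p) (hα : p < α) (hL : 0 ≤ L) (J : ℝ≥0∞) :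
    (ENNReal.ofReal (L ^ (1 - p / α) / (1 - p / α)) * J ^ (p / α)) ^ (1 / p) =
      ENNReal.ofReal ((α / (α - p)) ^ (1 / p) * L ^ (1 / p - 1 / α)) * J ^ (1 / α) := by
  have hr1 : 0 ≤ 1 - p / α := by bound
  rw [ENNReal.ofReal_mul_rpow_rpow (by positivity) _ _ (by positivity),
    rpow_one_div_hardy_upper_const hp hα hL]
  congr 2
  field_simp

lemma ofReal_hardy_lower_const_mul_rpow (hp : 0 < p) (hα : p < α) (hL : 0 ≤ L) (J : ℝ≥0∞) :
    (ENNReal.ofReal ((L ^ (1 - p / α) - (L / 2) ^ (1 - p / α)) / (1 - p / α) * 2 ^ (-(p / α))) *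
        J ^ (p / α)) ^ (1 / p) =
      ENNReal.ofReal (2 ^ (-(1 / α)) * (1 - 2 ^ ((p - α) / α)) ^ (1 / p)) *
        (ENNReal.ofReal ((α / (α - p)) ^ (1 / p) * L ^ (1 / p - 1 / α)) * J ^ (1 / α)) := by
  have hα0 : 0 < α := hp.trans hα
  have hr1 : 0 ≤ 1 - p / α := by bound
  -- the constant factors as `L^(1-p/α) / (1-p/α) * (1 - 2^((p-α)/α)) * 2^(-p/α)`
  have hhalf : (L / 2) ^ (1 - p / α) = L ^ (1 - p / α) * 2 ^ ((p - α) / α) := by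
    rw [Real.div_rpow hL zero_le_two, div_eq_mul_inv, ← Real.rpow_neg zero_le_two]
    congr 2
    field_simp
    ring
  have h2 : (2 : ℝ) ^ ((p - α) / α) ≤ 1 :=
    Real.rpow_le_one_of_one_le_of_nonpos one_le_two
      (div_nonpos_of_nonpos_of_nonneg (by linarith) hα0.le)
  rw [hhalf, ← mul_one_sub, mul_div_right_comm, mul_assoc,
    ENNReal.ofReal_mul_rpow_rpow (by bound) _ _ (by positivity),
    Real.mul_rpow (div_nonneg (by positivity) hr1) (by bound),
    rpow_one_div_hardy_upper_const hp hα hL,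
    Real.mul_rpow (by linarith) (by positivity), ← Real.rpow_mul zero_le_two,
    show -(p / α) * (1 / p) = -(1 / α) by field_simp, show p / α * (1 / p) = 1 / α by field_simp,
    ← mul_assoc (ENNReal.ofReal _), ← ENNReal.ofReal_mul (by bound)]
  ring_nf

end Constants

theorem stmt18_general {X : Type*} [MeasurableSpace X] (μ : Measure X)
    (L : ℝ) (hL : 0 < L) (hμ : μ Set.univ = ENNReal.ofReal L)
    (p α : ℝ) (hp : 1 ≤ p) (hα : p < α) (f : X → ℝ) (hf : Measurable f) :
    ENNReal.ofReal (2 ^ (-(1/α)) * (1 - 2 ^ ((p - α)/α)) ^ (1/p)) *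
        (ENNReal.ofReal ((α / (α - p)) ^ (1/p) * L ^ (1/p - 1/α)) *
          (∫⁻ s in Set.Ioc (0:ℝ) L, ENNReal.ofReal (rearr μ f s) ^ α) ^ (1/α)) ≤
      (∫⁻ t in Set.Ioc (0:ℝ) L,
        ((1 / ENNReal.ofReal t) *
          ∫⁻ s in Set.Ioc (0:ℝ) t, ENNReal.ofReal (rearr μ f s) ^ α) ^ (p/α)) ^ (1/p) ∧
    (∫⁻ t in Set.Ioc (0:ℝ) L,
        ((1 / ENNReal.ofReal t) *
          ∫⁻ s in Set.Ioc (0:ℝ) t, ENNReal.ofReal (rearr μ f s) ^ α) ^ (p/α)) ^ (1/p) ≤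
      ENNReal.ofReal ((α / (α - p)) ^ (1/p) * L ^ (1/p - 1/α)) *
        (∫⁻ s in Set.Ioc (0:ℝ) L, ENNReal.ofReal (rearr μ f s) ^ α) ^ (1/α) := by
  have : IsFiniteMeasure μ := ⟨hμ ▸ ENNReal.ofReal_lt_top⟩
  have hp0 : 0 < p := one_pos.trans_le hp
  have hα0 : 0 < α := hp0.trans hα
  have hr0 : 0 ≤ p / α := by positivity
  have hr1 : p / α < 1 := (div_lt_one hα0).mpr hα
  have hg : AntitoneOn (fun s => ENNReal.ofReal (rearr μ f s) ^ α) (Ioi 0) :=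
    Monotone.comp_antitoneOn (fun _ _ h => ENNReal.rpow_le_rpow (ENNReal.ofReal_le_ofReal h) hα0.le)
      (rearr_antitoneOn μ hf)
  constructor
  · rw [← ofReal_hardy_lower_const_mul_rpow hp0 hα hL.le]
    exact ENNReal.rpow_le_rpow (le_lintegral_average_rpow_of_antitoneOn hg hr0 hr1 hL)
      (by positivity)
  · rw [← ofReal_hardy_upper_const_mul_rpow hp0 hα hL.le]
    exact ENNReal.rpow_le_rpow (lintegral_average_rpow_le _ hr0 hr1 hL.le) (by positivity)

theorem stmt18 {X : Type*} [MeasurableSpace X] (μ : Measure X) [NullSingletonClass μ]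
    (L : ℝ) (hL : 0 < L) (hμ : μ Set.univ = ENNReal.ofReal L)
    (p α : ℝ) (hp : 1 ≤ p) (hα : p < α) (f : X → ℝ) (hf : Measurable f) :
    ENNReal.ofReal (2 ^ (-(1/α)) * (1 - 2 ^ ((p - α)/α)) ^ (1/p)) *
        (ENNReal.ofReal ((α / (α - p)) ^ (1/p) * L ^ (1/p - 1/α)) *
          (∫⁻ s in Set.Ioc (0:ℝ) L, ENNReal.ofReal (rearr μ f s) ^ α) ^ (1/α)) ≤
      (∫⁻ t in Set.Ioc (0:ℝ) L,
        ((1 / ENNReal.ofReal t) *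
          ∫⁻ s in Set.Ioc (0:ℝ) t, ENNReal.ofReal (rearr μ f s) ^ α) ^ (p/α)) ^ (1/p) ∧
    (∫⁻ t in Set.Ioc (0:ℝ) L,
        ((1 / ENNReal.ofReal t) *
          ∫⁻ s in Set.Ioc (0:ℝ) t, ENNReal.ofReal (rearr μ f s) ^ α) ^ (p/α)) ^ (1/p) ≤
      ENNReal.ofReal ((α / (α - p)) ^ (1/p) * L ^ (1/p - 1/α)) *
        (∫⁻ s in Set.Ioc (0:ℝ) L, ENNReal.ofReal (rearr μ f s) ^ α) ^ (1/α) :=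
  stmt18_general μ L hL hμ p α hp hα f hf
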